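/- Let G=(V,E) be a finite directed graph with initial vertex v_init ∈ V, and let M_G be the MDP constructed from (G, v_init) as in the Hamiltonian-path reduction. Let σ be a memoryless deterministic scheduler of M_G with Pr^σ_{s₀}(◇{s_a}) > 0. Then there is an integer n with 0 ≤ n ≤ |V|−1 (the number of vertex-states visited after v_init on the unique σ-path from v_init to s_a) such that Pr^σ_{s₀}(◇{s_a}) = 1/2^{n+1}; in particular Pr^σ_{s₀}(◇{s_a}) ≥ 1/2^{|V|}, and Pr^σ_{s₀}(◇{s_a}) = 1/2^{|V|} holds exactly when the σ-path from v_init to s_a corresponds to a Hamiltonian path of G starting at v_init. -/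
import Mathlib


open scoped BigOperators Classical
open Filter

/-- A finite history: an initial state together with a list of (action, next-state) steps. -/
abbrev Hist (S A : Type*) : Type _ := S × List (A × S)

/-- The last state of a history. -/
def Hist.last {S A : Type*} (π : Hist S A) : S :=
  (π.2.getLast?).elim π.1 Prod.snd

/-- A Markov decision process with finite state space `S` and finite action space `A`:
`P s a s'` is the transition probability, each state has at least one enabled action
(an action whose outgoing probabilities sum to `1`), and the outgoing probabilities
of a non-enabled action sum to `0`. -/
structure MDP (S A : Type*) [Fintype S] [Fintype A] where
  P : S → A → S → ℝ
  nonneg : ∀ s a s', 0 ≤ P s a s'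
  le_one : ∀ s a s', P s a s' ≤ 1
  sum_cases : ∀ s a, (∑ s', P s a s') = 1 ∨ (∑ s', P s a s') = 0
  exists_enabled : ∀ s, ∃ a, (∑ s', P s a s') = 1

namespace MDP

variable {S A : Type*} [Fintype S] [Fintype A]

/-- Action `a` is enabled in state `s`. -/
def enabled (M : MDP S A) (s : S) (a : A) : Prop := (∑ s', M.P s a s') = 1

/-- A state is absorbing if every enabled action loops on it with probability 1. -/
def Absorbing (M : MDP S A) (s : S) : Prop := ∀ a, M.enabled s a → M.P s a s = 1

end MDP

/-- A (history-dependent, randomized) scheduler for `M`: it assigns to every finite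
history a probability distribution over the actions enabled at its last state. -/
structure Scheduler {S A : Type*} [Fintype S] [Fintype A] (M : MDP S A) where
  choice : Hist S A → A → ℝ
  nonneg : ∀ π a, 0 ≤ choice π a
  sum_one : ∀ π, (∑ a, choice π a) = 1
  supp : ∀ π a, ¬ M.enabled (Hist.last π) a → choice π a = 0

namespace Scheduler

variable {S A : Type*} [Fintype S] [Fintype A] {M : MDP S A}

/-- A scheduler is memoryless if its choice only depends on the last state of the history. -/
def Memoryless (σ : Scheduler M) : Prop :=
  ∀ π π' : Hist S A, Hist.last π = Hist.last π' → σ.choice π = σ.choice π'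

/-- A scheduler is deterministic if all its choice probabilities are 0 or 1. -/
def Deterministic (σ : Scheduler M) : Prop :=
  ∀ π a, σ.choice π a = 0 ∨ σ.choice π a = 1

/-- Memoryless deterministic (MD) schedulers. -/
def MD (σ : Scheduler M) : Prop := σ.Memoryless ∧ σ.Deterministic

end Scheduler

/-- Probability of reaching the target set `T` within `n` steps, starting from history `π`,
under scheduler `σ`. -/
noncomputable def reachN {S A : Type*} [Fintype S] [Fintype A] (M : MDP S A)
    (σ : Scheduler M) (T : Set S) : ℕ → Hist S A → ℝ
  | 0, π => if Hist.last π ∈ T then 1 else 0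
  | n + 1, π =>
      if Hist.last π ∈ T then 1
      else ∑ a, σ.choice π a * ∑ s', M.P (Hist.last π) a s' *
        reachN M σ T n (π.1, π.2 ++ [(a, s')])

/-- `Pr M σ s T` is the probability of eventually reaching `T` from state `s` under
scheduler `σ`: the supremum of the step-bounded reachability probabilities. -/
noncomputable def Pr {S A : Type*} [Fintype S] [Fintype A] (M : MDP S A)
    (σ : Scheduler M) (s : S) (T : Set S) : ℝ :=
  ⨆ n : ℕ, reachN M σ T n (s, [])

/-- States of the Hamiltonian-path reduction MDP: the vertices `V`, the chain states
`s₀, s₁, …, s_{|V|−1}` (encoded as `Fin (card V)`), and the three extra states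
`s_⊥, s_a, s_b` (encoded as `Fin 3`: `0 = s_⊥`, `1 = s_a`, `2 = s_b`). -/
abbrev HSt (V : Type*) [Fintype V] : Type _ := V ⊕ (Fin (Fintype.card V) ⊕ Fin 3)

/-- Actions of the Hamiltonian-path reduction MDP: `none` is `τ` and `some (v, v')`
is the action associated with the edge `(v, v')`. -/
abbrev HAct (V : Type*) : Type _ := Option (V × V)

/-- The initial state `s₀` (the first chain state). -/
def hs0 (V : Type*) [Fintype V] [Nonempty V] : HSt V :=
  Sum.inr (Sum.inl ⟨0, Fintype.card_pos⟩)

/-- The absorbing state `s_⊥`. -/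
def hsBot (V : Type*) [Fintype V] : HSt V := Sum.inr (Sum.inr 0)

/-- The absorbing state `s_a`. -/
def hsA (V : Type*) [Fintype V] : HSt V := Sum.inr (Sum.inr 1)

/-- The absorbing state `s_b`. -/
def hsB (V : Type*) [Fintype V] : HSt V := Sum.inr (Sum.inr 2)

/-- The transition function of the Hamiltonian-path reduction MDP for a directed graph
`(V, E)` with initial vertex `vinit`:
`P(s₀,τ,vinit) = P(s₀,τ,s₁) = 1/2`; `P(sᵢ,τ,s_{i+1}) = P(sᵢ,τ,s_⊥) = 1/2` for
`1 ≤ i ≤ |V|−2`; `P(s_{|V|−1},τ,s_b) = P(s_{|V|−1},τ,s_⊥) = 1/2`; for `(v,v') ∈ E`,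
`P(v,(v,v'),v') = P(v,(v,v'),s_⊥) = 1/2`; `P(v,τ,s_a) = 1`; `s_⊥, s_a, s_b` absorbing. -/
noncomputable def hamP {V : Type*} [Fintype V] [DecidableEq V]
    (E : Set (V × V)) (vinit : V) : HSt V → HAct V → HSt V → ℝ := fun x act y =>
  match x, act with
  | Sum.inl v, none => if y = hsA V then 1 else 0
  | Sum.inl v, some (u, u') =>
      if u = v ∧ (u, u') ∈ E then
        (if y = Sum.inl u' then (1 : ℝ) / 2 else 0) +
          (if y = hsBot V then (1 : ℝ) / 2 else 0)
      else 0
  | Sum.inr (Sum.inl i), none =>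
      (if y = (if (i : ℕ) = 0 then Sum.inl vinit else hsBot V) then (1 : ℝ) / 2 else 0) +
        (if h : (i : ℕ) + 1 < Fintype.card V then
            (if y = Sum.inr (Sum.inl ⟨(i : ℕ) + 1, h⟩) then (1 : ℝ) / 2 else 0)
          else (if y = hsB V then (1 : ℝ) / 2 else 0))
  | Sum.inr (Sum.inl _), some _ => 0
  | Sum.inr (Sum.inr e), none => if y = Sum.inr (Sum.inr e) then 1 else 0
  | Sum.inr (Sum.inr _), some _ => 0

/-- `l` is a Hamiltonian path of the graph `(V, E)` starting at `vinit`: it lists every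
vertex exactly once, starts at `vinit`, and follows edges of `E`. -/
def IsHamPath {V : Type*} [Fintype V] (E : Set (V × V)) (vinit : V) (l : List V) : Prop :=
  l.Nodup ∧ l.length = Fintype.card V ∧ l.head? = some vinit ∧
    l.Chain' (fun u u' => (u, u') ∈ E)

/-- The list of vertices `l` follows the memoryless deterministic scheduler `σ`:
at each vertex except the last, `σ` (surely) takes the edge action to the next vertex
of `l`, and at the last vertex of `l` it (surely) takes `τ` (moving to `s_a`). -/
def FollowsScheduler {V : Type*} [Fintype V] [DecidableEq V] {E : Set (V × V)}
    {vinit : V} {M : MDP (HSt V) (HAct V)} (_hM : M.P = hamP E vinit)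
    (σ : Scheduler M) (l : List V) : Prop :=
  l.Chain' (fun u u' => σ.choice ((Sum.inl u : HSt V), []) (some (u, u')) = 1) ∧
    ∀ w : V, l.getLast? = some w → σ.choice ((Sum.inl w : HSt V), []) none = 1


section Generic

variable {S A : Type*} [Fintype S] [Fintype A] {M : MDP S A}

lemma hist_last_mk (s : S) : Hist.last ((s, []) : Hist S A) = s := rfl

lemma hist_last_append (π : Hist S A) (a : A) (s' : S) :
    Hist.last ((π.1, π.2 ++ [(a, s')]) : Hist S A) = s' := by
  simp [Hist.last, List.getLast?_concat]

lemma reachN_nonneg (σ : Scheduler M) (T : Set S) :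
    ∀ n (π : Hist S A), 0 ≤ reachN M σ T n π := by
  intro n
  induction n with
  | zero => intro π; simp only [reachN]; split <;> norm_num
  | succ n ih =>
    intro π
    simp only [reachN]
    split
    · norm_num
    · exact Finset.sum_nonneg fun a _ => mul_nonneg (σ.nonneg _ _)
        (Finset.sum_nonneg fun s' _ => mul_nonneg (M.nonneg _ _ _) (ih _))

lemma reachN_mono (σ : Scheduler M) (T : Set S) :
    ∀ n (π : Hist S A), reachN M σ T n π ≤ reachN M σ T (n + 1) π := by
  intro n
  induction n with
  | zero =>
    intro π
    by_cases h : Hist.last π ∈ T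
    · simp only [reachN, if_pos h]; norm_num
    · simp only [reachN, if_neg h]
      exact Finset.sum_nonneg fun a _ => mul_nonneg (σ.nonneg _ _)
        (Finset.sum_nonneg fun s' _ => mul_nonneg (M.nonneg _ _ _) (by split <;> norm_num))
  | succ n ih =>
    intro π
    by_cases h : Hist.last π ∈ T
    · simp [reachN, if_pos h]
    · simp only [reachN, if_neg h]
      refine Finset.sum_le_sum fun a _ => mul_le_mul_of_nonneg_left ?_ (σ.nonneg _ _)
      exact Finset.sum_le_sum fun s' _ => mul_le_mul_of_nonneg_left (ih _) (M.nonneg _ _ _)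

lemma reachN_eq_of_last (σ : Scheduler M) (hm : σ.Memoryless) (T : Set S) :
    ∀ n (π π' : Hist S A), Hist.last π = Hist.last π' →
      reachN M σ T n π = reachN M σ T n π' := by
  intro n
  induction n with
  | zero => intro π π' h; simp only [reachN, h]
  | succ n ih =>
    intro π π' h
    simp only [reachN, h]
    split
    · rfl
    · have hc : σ.choice π = σ.choice π' := hm _ _ h
      rw [hc]
      refine Finset.sum_congr rfl fun a _ => ?_
      congr 1
      refine Finset.sum_congr rfl fun s' _ => ?_
      congr 1
      exact ih _ _ (by rw [hist_last_append, hist_last_append])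

end Generic

section Determin

variable {S A : Type*} [Fintype S] [Fintype A] {M : MDP S A}

/-- The action chosen by a deterministic scheduler at state `s` (on the empty history). -/
noncomputable def hact (σ : Scheduler M) (s : S) : A :=
  if h : ∃ a, σ.choice ((s, []) : Hist S A) a = 1 then h.choose
  else (M.exists_enabled s).choose

lemma exists_choice_one (σ : Scheduler M) (hd : σ.Deterministic) (s : S) :
    ∃ a, σ.choice ((s, []) : Hist S A) a = 1 := by
  by_contra h
  push_neg at h
  have hz : ∀ a, σ.choice ((s, []) : Hist S A) a = 0 :=
    fun a => (hd _ a).resolve_right (h a)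
  have h1 := σ.sum_one ((s, []) : Hist S A)
  rw [Finset.sum_eq_zero fun a _ => hz a] at h1
  exact zero_ne_one h1

lemma hact_choice (σ : Scheduler M) (hd : σ.Deterministic) (s : S) :
    σ.choice ((s, []) : Hist S A) (hact σ s) = 1 := by
  rw [hact, dif_pos (exists_choice_one σ hd s)]
  exact (exists_choice_one σ hd s).choose_spec

lemma choice_eq_hact (σ : Scheduler M) (hd : σ.Deterministic) {s : S} {a : A}
    (h : σ.choice ((s, []) : Hist S A) a ≠ 0) : a = hact σ s := by
  by_contra hne
  have h1 : σ.choice ((s, []) : Hist S A) a = 1 := (hd _ a).resolve_left h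
  have h2 := hact_choice σ hd s
  have hle : (2 : ℝ) ≤ 1 := by
    calc (2 : ℝ) = σ.choice ((s, []) : Hist S A) a
          + σ.choice ((s, []) : Hist S A) (hact σ s) := by rw [h1, h2]; norm_num
    _ = ∑ b ∈ ({a, hact σ s} : Finset A), σ.choice ((s, []) : Hist S A) b :=
        (Finset.sum_pair hne).symm
    _ ≤ ∑ b, σ.choice ((s, []) : Hist S A) b :=
        Finset.sum_le_sum_of_subset_of_nonneg (Finset.subset_univ _)
          (fun b _ _ => σ.nonneg _ b)
    _ = 1 := σ.sum_one _
  norm_num at hle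

lemma choice_ne_hact (σ : Scheduler M) (hd : σ.Deterministic) {s : S} {a : A}
    (h : a ≠ hact σ s) : σ.choice ((s, []) : Hist S A) a = 0 := by
  by_contra hc
  exact h (choice_eq_hact σ hd hc)

lemma sum_choice_mul (σ : Scheduler M) (hd : σ.Deterministic) (s : S) (f : A → ℝ) :
    ∑ a, σ.choice ((s, []) : Hist S A) a * f a = f (hact σ s) := by
  rw [Finset.sum_eq_single (hact σ s)]
  · rw [hact_choice σ hd s, one_mul]
  · intro b _ hb; rw [choice_ne_hact σ hd hb, zero_mul]
  · intro h; exact absurd (Finset.mem_univ _) h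

lemma choice_one_enabled (σ : Scheduler M) {s : S} {a : A}
    (h : σ.choice ((s, []) : Hist S A) a ≠ 0) : M.enabled s a := by
  by_contra hc
  exact h (σ.supp ((s, []) : Hist S A) a hc)

end Determin

section HamModel

variable {V : Type*} [Fintype V] [DecidableEq V] [Nonempty V]
variable {E : Set (V × V)} {vinit : V} {M : MDP (HSt V) (HAct V)}

/-- Step-bounded reachability of `s_a` from a single state. -/
noncomputable def gr (σ : Scheduler M) (n : ℕ) (s : HSt V) : ℝ :=
  reachN M σ ({hsA V} : Set (HSt V)) n ((s, []) : Hist (HSt V) (HAct V))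

lemma sum_ind_mul (c : HSt V) (r : ℝ) (f : HSt V → ℝ) :
    ∑ y, (if y = c then r else 0) * f y = r * f c := by
  simp [ite_mul]

lemma gr_zero (σ : Scheduler M) {s : HSt V} (hs : s ≠ hsA V) : gr σ 0 s = 0 := by
  simp only [gr, reachN, hist_last_mk, Set.mem_singleton_iff, if_neg hs]

lemma gr_hsA (σ : Scheduler M) (n : ℕ) : gr σ n (hsA V) = 1 := by
  cases n <;> simp [gr, reachN, hist_last_mk]

lemma gr_succ (σ : Scheduler M) (hσ : σ.MD) (n : ℕ) {s : HSt V} (hs : s ≠ hsA V) :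
    gr σ (n + 1) s = ∑ s', M.P s (hact σ s) s' * gr σ n s' := by
  simp only [gr, reachN, hist_last_mk, Set.mem_singleton_iff, if_neg hs]
  rw [sum_choice_mul σ hσ.2 s]
  refine Finset.sum_congr rfl fun s' _ => ?_
  congr 1
  exact reachN_eq_of_last σ hσ.1 _ n _ _ (by simp [Hist.last])

lemma enabled_vertex_edge (hM : M.P = hamP E vinit) {v u u' : V}
    (h : M.enabled (Sum.inl v) (some (u, u'))) : u = v ∧ (u, u') ∈ E := by
  by_contra hc
  unfold MDP.enabled at h
  rw [hM] at h
  rw [Finset.sum_eq_zero (fun y _ => by simp only [hamP]; rw [if_neg hc])] at h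
  exact zero_ne_one h

lemma hact_nonvertex (σ : Scheduler M) (hd : σ.Deterministic) (hM : M.P = hamP E vinit)
    (x : Fin (Fintype.card V) ⊕ Fin 3) : hact σ (Sum.inr x : HSt V) = none := by
  cases h : hact σ (Sum.inr x : HSt V) with
  | none => rfl
  | some p =>
    exfalso
    obtain ⟨u, u'⟩ := p
    have h1 : σ.choice ((Sum.inr x : HSt V), []) (some (u, u')) = 1 :=
      h ▸ hact_choice σ hd _
    have hen : M.enabled (Sum.inr x : HSt V) (some (u, u')) :=
      choice_one_enabled σ (h1 ▸ one_ne_zero)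
    unfold MDP.enabled at hen
    rw [hM] at hen
    rw [Finset.sum_eq_zero (fun y _ => by obtain x' | x' := x <;> simp [hamP])] at hen
    exact zero_ne_one hen

/-- States from which `s_a` is unreachable. -/
def HDead {V : Type*} [Fintype V] : HSt V → Prop
  | Sum.inl _ => False
  | Sum.inr (Sum.inl i) => 0 < (i : ℕ)
  | Sum.inr (Sum.inr e) => e ≠ 1

lemma hdead_ne_hsA {s : HSt V} (h : HDead s) : s ≠ hsA V := by
  obtain v | (i | e) := s
  · exact (h : False).elim
  · simp [hsA]
  · simp only [hsA, ne_eq, Sum.inr.injEq]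
    exact fun he => (h : e ≠ 1) (by simpa using he)

lemma sum_chain (σ : Scheduler M) (hM : M.P = hamP E vinit) (n : ℕ)
    (i : Fin (Fintype.card V)) :
    ∑ s', M.P (Sum.inr (Sum.inl i) : HSt V) none s' * gr σ n s'
      = 1 / 2 * gr σ n (if (i : ℕ) = 0 then Sum.inl vinit else hsBot V)
        + 1 / 2 * (if h : (i : ℕ) + 1 < Fintype.card V then
            gr σ n (Sum.inr (Sum.inl ⟨(i : ℕ) + 1, h⟩)) else gr σ n (hsB V)) := by
  rw [hM]
  by_cases h : (i : ℕ) + 1 < Fintype.card V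
  · rw [dif_pos h]
    simp only [hamP, dif_pos h, add_mul]
    rw [Finset.sum_add_distrib, sum_ind_mul, sum_ind_mul]
  · rw [dif_neg h]
    simp only [hamP, dif_neg h, add_mul]
    rw [Finset.sum_add_distrib, sum_ind_mul, sum_ind_mul]

lemma sum_vertex_edge (σ : Scheduler M) (hM : M.P = hamP E vinit) (n : ℕ)
    {v u' : V} (hE : (v, u') ∈ E) :
    ∑ s', M.P (Sum.inl v : HSt V) (some (v, u')) s' * gr σ n s'
      = 1 / 2 * gr σ n (Sum.inl u') + 1 / 2 * gr σ n (hsBot V) := by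
  rw [hM]
  have hP : ∀ y, hamP E vinit (Sum.inl v) (some (v, u')) y
      = (if y = Sum.inl u' then (1:ℝ)/2 else 0) + (if y = hsBot V then (1:ℝ)/2 else 0) := by
    intro y; simp [hamP, hE]
  simp only [hP, add_mul]
  rw [Finset.sum_add_distrib, sum_ind_mul, sum_ind_mul]

lemma sum_vertex_tau (σ : Scheduler M) (hM : M.P = hamP E vinit) (n : ℕ) (v : V) :
    ∑ s', M.P (Sum.inl v : HSt V) none s' * gr σ n s' = 1 := by
  rw [hM]
  simp only [hamP]
  rw [sum_ind_mul, gr_hsA, one_mul]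

lemma gr_dead (σ : Scheduler M) (hσ : σ.MD) (hM : M.P = hamP E vinit) :
    ∀ n (s : HSt V), HDead s → gr σ n s = 0 := by
  intro n
  induction n with
  | zero => intro s hs; exact gr_zero σ (hdead_ne_hsA hs)
  | succ n ih =>
    intro s hs
    rw [gr_succ σ hσ n (hdead_ne_hsA hs)]
    obtain v | (i | e) := s
    · exact (hs : False).elim
    · rw [hact_nonvertex σ hσ.2 hM, sum_chain σ hM n i]
      have hi : ¬ ((i : ℕ) = 0) := Nat.pos_iff_ne_zero.1 hs
      rw [if_neg hi, ih _ (show HDead (hsBot V) from show (0 : Fin 3) ≠ 1 from by decide)]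
      have h2 : (if h : (i : ℕ) + 1 < Fintype.card V then
          gr σ n (Sum.inr (Sum.inl ⟨(i : ℕ) + 1, h⟩)) else gr σ n (hsB V)) = 0 := by
        split
        · exact ih _ (Nat.succ_pos _)
        · exact ih _ (show HDead (hsB V) from show (2 : Fin 3) ≠ 1 from by decide)
      rw [h2]
      ring
    · rw [hact_nonvertex σ hσ.2 hM]
      rw [hM]
      simp only [hamP]
      rw [sum_ind_mul, ih _ hs, mul_zero]

end HamModel

section TauPath

variable {V : Type*} [Fintype V] [DecidableEq V] [Nonempty V]
variable {E : Set (V × V)} {vinit : V} {M : MDP (HSt V) (HAct V)}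

/-- The `σ`-path from `v` takes exactly `k` edge steps and then the `τ` action. -/
def TauIn (σ : Scheduler M) : ℕ → V → Prop
  | 0, v => hact σ (Sum.inl v : HSt V) = none
  | k + 1, v => ∃ u', hact σ (Sum.inl v : HSt V) = some (v, u') ∧ TauIn σ k u'

lemma tauIn_unique (σ : Scheduler M) :
    ∀ k v k', TauIn σ k v → TauIn σ k' v → k = k' := by
  intro k
  induction k with
  | zero =>
    intro v k' h h'
    cases k' with
    | zero => rfl
    | succ m =>
      obtain ⟨u', hu, _⟩ := h'
      rw [show hact σ (Sum.inl v : HSt V) = none from h] at hu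
      cases hu
  | succ m ih =>
    intro v k' h h'
    obtain ⟨u', hu, ht⟩ := h
    cases k' with
    | zero =>
      rw [show hact σ (Sum.inl v : HSt V) = none from h'] at hu
      cases hu
    | succ m' =>
      obtain ⟨u'', hu'', ht''⟩ := h'
      rw [hu] at hu''
      obtain rfl : u' = u'' := congrArg Prod.snd (Option.some.inj hu'')
      rw [ih u' m' ht ht'']

lemma hact_vertex_edge (σ : Scheduler M) (hσ : σ.MD) (hM : M.P = hamP E vinit)
    {v u u' : V} (ha : hact σ (Sum.inl v : HSt V) = some (u, u')) :
    u = v ∧ (u, u') ∈ E := by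
  have h1 : σ.choice ((Sum.inl v : HSt V), []) (some (u, u')) = 1 :=
    ha ▸ hact_choice σ hσ.2 _
  exact enabled_vertex_edge hM (choice_one_enabled σ (h1 ▸ one_ne_zero))

lemma gr_vertex_tau (σ : Scheduler M) (hσ : σ.MD) (hM : M.P = hamP E vinit) :
    ∀ n : ℕ, (∀ k v, TauIn σ k v → k < n → gr σ n (Sum.inl v : HSt V) = 1 / 2 ^ k)
      ∧ (∀ v : V, (∀ k, k < n → ¬ TauIn σ k v) → gr σ n (Sum.inl v : HSt V) = 0) := by
  have hne : ∀ v : V, (Sum.inl v : HSt V) ≠ hsA V := fun v => by simp [hsA]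
  intro n
  induction n with
  | zero =>
    refine ⟨fun k v _ hk => absurd hk (Nat.not_lt_zero k), fun v _ => gr_zero σ (hne v)⟩
  | succ n ih =>
    constructor
    · intro k v hk hkn
      rw [gr_succ σ hσ n (hne v)]
      cases k with
      | zero =>
        rw [show hact σ (Sum.inl v : HSt V) = none from hk, sum_vertex_tau σ hM n v]
        norm_num
      | succ m =>
        obtain ⟨u', ha, ht⟩ := hk
        have hE : (v, u') ∈ E := (hact_vertex_edge σ hσ hM ha).2
        rw [ha, sum_vertex_edge σ hM n hE,
          ih.1 m u' ht (by omega),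
          gr_dead σ hσ hM n _ (show HDead (hsBot V) from show (0 : Fin 3) ≠ 1 from by decide)]
        rw [mul_zero, add_zero, pow_succ]
        ring
    · intro v hnv
      rw [gr_succ σ hσ n (hne v)]
      cases hav : hact σ (Sum.inl v : HSt V) with
      | none => exact absurd (show TauIn σ 0 v from hav) (hnv 0 (Nat.succ_pos n))
      | some p =>
        obtain ⟨u, u'⟩ := p
        obtain ⟨rfl, hE⟩ := hact_vertex_edge σ hσ hM hav
        rw [sum_vertex_edge σ hM n hE,
          ih.2 u' (fun k hk ht => hnv (k + 1) (by omega) ⟨u', hav, ht⟩),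
          gr_dead σ hσ hM n _ (show HDead (hsBot V) from show (0 : Fin 3) ≠ 1 from by decide)]
        ring

lemma gr_s0 (σ : Scheduler M) (hσ : σ.MD) (hM : M.P = hamP E vinit) (n : ℕ) :
    gr σ (n + 1) (hs0 V) = 1 / 2 * gr σ n (Sum.inl vinit : HSt V) := by
  have h0 : (hs0 V : HSt V) = Sum.inr (Sum.inl ⟨0, Fintype.card_pos⟩) := rfl
  have hne : (hs0 V : HSt V) ≠ hsA V := by simp [hs0, hsA]
  rw [gr_succ σ hσ n hne, h0, hact_nonvertex σ hσ.2 hM, sum_chain σ hM n _]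
  have h1 : ((⟨0, Fintype.card_pos⟩ : Fin (Fintype.card V)) : ℕ) = 0 := rfl
  rw [if_pos h1]
  have h2 : (if h : ((⟨0, Fintype.card_pos⟩ : Fin (Fintype.card V)) : ℕ) + 1 < Fintype.card V
      then gr σ n (Sum.inr (Sum.inl ⟨((⟨0, Fintype.card_pos⟩ : Fin (Fintype.card V)) : ℕ) + 1, h⟩))
      else gr σ n (hsB V)) = 0 := by
    split
    · exact gr_dead σ hσ hM n _ (Nat.succ_pos 0)
    · exact gr_dead σ hσ hM n _ (show HDead (hsB V) from show (2 : Fin 3) ≠ 1 from by decide)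
  rw [h2]
  ring

lemma pr_gr (σ : Scheduler M) :
    Pr M σ (hs0 V) ({hsA V} : Set (HSt V)) = ⨆ n : ℕ, gr σ n (hs0 V) := rfl

lemma pr_eq (σ : Scheduler M) (hσ : σ.MD) (hM : M.P = hamP E vinit) {k : ℕ}
    (hk : TauIn σ k vinit) :
    Pr M σ (hs0 V) ({hsA V} : Set (HSt V)) = 1 / 2 ^ (k + 1) := by
  have hg : ∀ n, k + 2 ≤ n → gr σ n (hs0 V) = 1 / 2 ^ (k + 1) := by
    intro n hn
    obtain ⟨m, rfl⟩ : ∃ m, n = m + 1 := ⟨n - 1, by omega⟩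
    rw [gr_s0 σ hσ hM m, (gr_vertex_tau σ hσ hM m).1 k vinit hk (by omega), pow_succ]
    ring
  have hmono : Monotone (fun n => gr σ n (hs0 V)) :=
    monotone_nat_of_le_succ (fun n => reachN_mono σ _ n _)
  have hub : ∀ n, gr σ n (hs0 V) ≤ 1 / 2 ^ (k + 1) := by
    intro n
    calc gr σ n (hs0 V) ≤ gr σ (max n (k + 2)) (hs0 V) := hmono (le_max_left _ _)
    _ = 1 / 2 ^ (k + 1) := hg _ (le_max_right _ _)
  rw [pr_gr]
  apply le_antisymm
  · exact ciSup_le hub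
  · have hbdd : BddAbove (Set.range fun n => gr σ n (hs0 V)) :=
      ⟨1 / 2 ^ (k + 1), by rintro x ⟨n, rfl⟩; exact hub n⟩
    calc (1 : ℝ) / 2 ^ (k + 1) = gr σ (k + 2) (hs0 V) := (hg _ le_rfl).symm
    _ ≤ ⨆ n, gr σ n (hs0 V) := le_ciSup hbdd (k + 2)

lemma pr_zero (σ : Scheduler M) (hσ : σ.MD) (hM : M.P = hamP E vinit)
    (h : ∀ k, ¬ TauIn σ k vinit) :
    Pr M σ (hs0 V) ({hsA V} : Set (HSt V)) = 0 := by
  have hz : ∀ n, gr σ n (hs0 V) = 0 := by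
    intro n
    cases n with
    | zero => exact gr_zero σ (by simp [hs0, hsA])
    | succ n =>
      rw [gr_s0 σ hσ hM n, (gr_vertex_tau σ hσ hM n).2 vinit (fun k _ => h k), mul_zero]
  rw [pr_gr]
  rw [show (fun n : ℕ => gr σ n (hs0 V)) = fun _ => (0 : ℝ) from funext hz]
  exact ciSup_const

end TauPath

section Lists

variable {V : Type*} [Fintype V] [DecidableEq V] [Nonempty V]
variable {E : Set (V × V)} {vinit : V} {M : MDP (HSt V) (HAct V)}

lemma tauIn_list (σ : Scheduler M) (hσ : σ.MD) (hM : M.P = hamP E vinit) :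
    ∀ k (v : V), TauIn σ k v → ∃ l : List V,
      l.length = k + 1 ∧ l.head? = some v ∧ l.Nodup ∧
      (∀ w ∈ l, ∃ j, j ≤ k ∧ TauIn σ j w) ∧
      l.Chain' (fun u u' => σ.choice ((Sum.inl u : HSt V), []) (some (u, u')) = 1) ∧
      (∀ w : V, l.getLast? = some w → σ.choice ((Sum.inl w : HSt V), []) none = 1) ∧
      l.Chain' (fun u u' => (u, u') ∈ E) := by
  intro k
  induction k with
  | zero =>
    intro v hv
    refine ⟨[v], rfl, rfl, List.nodup_singleton v, ?_, List.isChain_singleton v, ?_,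
      List.isChain_singleton v⟩
    · intro w hw
      obtain rfl : w = v := by simpa using hw
      exact ⟨0, le_refl 0, hv⟩
    · intro w hw
      obtain rfl : v = w := by simpa using hw
      rw [← show hact σ (Sum.inl v : HSt V) = none from hv]
      exact hact_choice σ hσ.2 _
  | succ m ih =>
    intro v hv
    obtain ⟨u', ha, ht⟩ := hv
    obtain ⟨l, hlen, hhead, hnd, hmem, hcc, hcl, hcE⟩ := ih u' ht
    have hchoice : σ.choice ((Sum.inl v : HSt V), []) (some (v, u')) = 1 :=
      ha ▸ hact_choice σ hσ.2 _
    have hE : (v, u') ∈ E := (hact_vertex_edge σ hσ hM ha).2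
    have hvnot : v ∉ l := by
      intro hvl
      obtain ⟨j, hj, htj⟩ := hmem v hvl
      have := tauIn_unique σ (m + 1) v j ⟨u', ha, ht⟩ htj
      omega
    refine ⟨v :: l, by simp [hlen], rfl, List.nodup_cons.2 ⟨hvnot, hnd⟩, ?_, ?_, ?_, ?_⟩
    · rintro w hw
      rcases List.mem_cons.1 hw with rfl | hw'
      · exact ⟨m + 1, le_refl _, ⟨u', ha, ht⟩⟩
      · obtain ⟨j, hj, htj⟩ := hmem w hw'
        exact ⟨j, by omega, htj⟩
    · refine List.isChain_cons.2 ⟨?_, hcc⟩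
      intro b hb
      rw [hhead] at hb
      obtain rfl : u' = b := by simpa using hb
      exact hchoice
    · intro w hw
      cases l with
      | nil => simp at hlen
      | cons x l' =>
        rw [List.getLast?_cons_cons] at hw
        exact hcl w hw
    · refine List.isChain_cons.2 ⟨?_, hcE⟩
      intro b hb
      rw [hhead] at hb
      obtain rfl : u' = b := by simpa using hb
      exact hE

lemma follows_tauIn (σ : Scheduler M) (hd : σ.Deterministic) :
    ∀ l : List V, ∀ v : V, l.head? = some v →
      l.Chain' (fun u u' => σ.choice ((Sum.inl u : HSt V), []) (some (u, u')) = 1) →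
      (∀ w : V, l.getLast? = some w → σ.choice ((Sum.inl w : HSt V), []) none = 1) →
      TauIn σ (l.length - 1) v := by
  intro l
  induction l with
  | nil => intro v hv _ _; simp at hv
  | cons a t ih =>
    intro v hv hc hl
    obtain rfl : v = a := by simpa using hv.symm
    cases t with
    | nil =>
      have h1 := hl v (by simp)
      exact (choice_eq_hact σ hd (h1 ▸ one_ne_zero)).symm
    | cons b t' =>
      have hc1 : σ.choice ((Sum.inl v : HSt V), []) (some (v, b)) = 1 :=
        (List.isChain_cons_cons.1 hc).1
      have hact1 : hact σ (Sum.inl v : HSt V) = some (v, b) :=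
        (choice_eq_hact σ hd (hc1 ▸ one_ne_zero)).symm
      have htau := ih b rfl (List.isChain_cons_cons.1 hc).2
        (fun w hw => hl w (by rw [List.getLast?_cons_cons]; exact hw))
      exact ⟨b, hact1, htau⟩

end Lists

/-- Let `σ` be an MD scheduler of the reduction MDP with
`Pr^σ_{s₀}(◇{s_a}) > 0`.  Then there is `n ≤ |V|−1` (the number of vertex-states visited
after `vinit` on the unique `σ`-path from `vinit` to `s_a`) with
`Pr^σ_{s₀}(◇{s_a}) = 1/2^{n+1}`; in particular `Pr^σ_{s₀}(◇{s_a}) ≥ 1/2^{|V|}`, with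
equality exactly when the `σ`-path corresponds to a Hamiltonian path of `G` starting
at `vinit`. -/
theorem MD_prob_sa_structure
    {V : Type*} [Fintype V] [DecidableEq V] [Nonempty V]
    (E : Set (V × V)) (vinit : V)
    (M : MDP (HSt V) (HAct V)) (hM : M.P = hamP E vinit)
    (σ : Scheduler M) (hσ : σ.MD)
    (hpos : 0 < Pr M σ (hs0 V) ({hsA V} : Set (HSt V))) :
    ∃ n : ℕ, n ≤ Fintype.card V - 1 ∧
      Pr M σ (hs0 V) ({hsA V} : Set (HSt V)) = 1 / 2 ^ (n + 1) ∧
      1 / 2 ^ (Fintype.card V) ≤ Pr M σ (hs0 V) ({hsA V} : Set (HSt V)) ∧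
      (Pr M σ (hs0 V) ({hsA V} : Set (HSt V)) = 1 / 2 ^ (Fintype.card V) ↔
        ∃ l : List V, IsHamPath E vinit l ∧ FollowsScheduler hM σ l) := by
  by_cases hex : ∃ k, TauIn σ k vinit
  · obtain ⟨k, hk⟩ := hex
    have hPr := pr_eq σ hσ hM hk
    obtain ⟨l, hlen, hhead, hnd, hmem, hcc, hcl, hcE⟩ := tauIn_list σ hσ hM k vinit hk
    have hcard : k + 1 ≤ Fintype.card V := by
      have h1 := List.Nodup.length_le_card hnd
      rw [hlen] at h1
      exact h1
    refine ⟨k, by omega, hPr, ?_, ?_⟩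
    · rw [hPr]
      apply one_div_le_one_div_of_le (by positivity)
      exact pow_le_pow_right₀ one_le_two hcard
    · rw [hPr]
      constructor
      · intro he
        have h2 : (2 : ℝ) ^ (Fintype.card V) = 2 ^ (k + 1) := by
          rw [div_eq_div_iff (by positivity) (by positivity)] at he
          linarith
        have hk1 : Fintype.card V = k + 1 :=
          pow_right_injective₀ (by norm_num : (0:ℝ) < 2) (by norm_num) h2
        exact ⟨l, ⟨hnd, by rw [hlen, hk1], hhead, hcE⟩, hcc, hcl⟩
      · rintro ⟨l', ⟨hnd', hlen', hhead', hE'⟩, hfc', hfl'⟩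
        have htau' := follows_tauIn σ hσ.2 l' vinit hhead' hfc' hfl'
        have hkeq := tauIn_unique σ k vinit (l'.length - 1) hk htau'
        have hcV : 1 ≤ Fintype.card V := Fintype.card_pos
        rw [hkeq, hlen']
        have h3 : Fintype.card V - 1 + 1 = Fintype.card V := by omega
        rw [h3]
  · exfalso
    push_neg at hex
    rw [pr_zero σ hσ hM hex] at hpos
    exact lt_irrefl 0 hpos
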